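/- Define g(t,v) = b(t,v)/(v · ∂b/∂v(t,v)) = 1 + D(1 - N(d₂(t,v)))/(v N(d₁(t,v))) for 0 ≤ t < T, 0 < v ≤ D. If 1/2 + α/σ₁² > 0, then g is bounded on [0,T) × (0, D]: sup g < ∞. In particular, along any sequence (tₙ, vₙ) → (t, 0) with t ∈ [0,T], g(tₙ,vₙ) → 1, and along (tₙ,vₙ) → (T, v) with 0 < v < D, g(tₙ,vₙ) → 1. -/

import Mathlib

open Real

/-- Standard normal CDF. -/
noncomputable def stdNormalCDF (x : ℝ) : ℝ :=
  ∫ z in Set.Iic x, (Real.sqrt (2 * Real.pi))⁻¹ * Real.exp (-z ^ 2 / 2)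

noncomputable def d₁ (α σ₁ D T t v : ℝ) : ℝ :=
  (Real.log (D / v) - σ₁ ^ 2 * (1 / 2 + α / σ₁ ^ 2) * (T - t)) / (σ₁ * Real.sqrt (T - t))

noncomputable def d₂ (α σ₁ D T t v : ℝ) : ℝ :=
  d₁ α σ₁ D T t v + σ₁ * Real.sqrt (T - t)

/-- The Merton-style bond price function `b`. -/
noncomputable def bfun (α σ₁ D T t v : ℝ) : ℝ :=
  v * Real.exp (α * (T - t)) * stdNormalCDF (d₁ α σ₁ D T t v)
    + D * (1 - stdNormalCDF (d₂ α σ₁ D T t v))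

open Filter

/-- The ratio `b/(v ∂b/∂v)` in its simplified form. -/
noncomputable def gratio (α σ₁ D T t v : ℝ) : ℝ :=
  1 + D * (1 - stdNormalCDF (d₂ α σ₁ D T t v)) / (v * stdNormalCDF (d₁ α σ₁ D T t v))

/-! With `k = σ₁ √(T - t)` one has `log (D / v) = k d₁ + k² / 2 + α (T - t)` and `d₂ = d₁ + k`, so
the Chernoff bound `1 - N(y) ≤ exp (s² / 2 - s y)` for the standard Gaussian, taken at `s = k + 1`,
gives `D / v · (1 - N(d₂)) ≤ exp (α (T - t) + 1 / 2 - d₁)`. As `d₁` is bounded below by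
`log (D / v) / (σ₁ √T) - |1 / 2 + α / σ₁²| σ₁ √T`, the denominator `N(d₁)` of `g - 1` stays away
from `0`. Hence `g` is bounded, and `g → 1` whenever `d₁ → ∞`, which happens both as `v → 0` and
as `t → T` with `v < D` fixed. -/

open MeasureTheory ProbabilityTheory Set Filter Topology

lemma stdNormalCDF_eq_cdf (x : ℝ) : stdNormalCDF x = cdf (gaussianReal 0 1) x := by
  rw [cdf_eq_real, measureReal_def, gaussianReal_apply_eq_integral _ one_ne_zero,
    ENNReal.toReal_ofReal (setIntegral_nonneg measurableSet_Iic
      fun _ _ ↦ gaussianPDFReal_nonneg _ _ _)]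
  simp [stdNormalCDF, gaussianPDFReal]

lemma stdNormalCDF_pos (x : ℝ) : 0 < stdNormalCDF x := by
  rw [stdNormalCDF_eq_cdf, cdf_eq_real]
  refine ENNReal.toReal_pos (fun h ↦ ?_) (measure_ne_top _ _)
  simpa using gaussianReal_absolutelyContinuous' 0 one_ne_zero h

lemma stdNormalCDF_mono : Monotone stdNormalCDF := by
  simpa only [funext stdNormalCDF_eq_cdf] using (cdf (gaussianReal 0 1)).mono

lemma stdNormalCDF_le_one (x : ℝ) : stdNormalCDF x ≤ 1 :=
  stdNormalCDF_eq_cdf x ▸ cdf_le_one _ _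

lemma one_sub_stdNormalCDF_le_exp {s : ℝ} (hs : 0 ≤ s) (y : ℝ) :
    1 - stdNormalCDF y ≤ exp (s ^ 2 / 2 - s * y) := by
  have hmgf := measure_ge_le_exp_mul_mgf (μ := gaussianReal 0 1) (X := id) y hs
    (integrable_exp_mul_gaussianReal s)
  rw [mgf_id_gaussianReal] at hmgf
  rw [stdNormalCDF_eq_cdf, cdf_eq_real, ← probReal_compl_eq_one_sub measurableSet_Iic, compl_Iic]
  calc (gaussianReal 0 1).real (Ioi y) ≤ (gaussianReal 0 1).real {ω | y ≤ id ω} :=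
        measureReal_mono fun ω (h : y < ω) ↦ h.le
    _ ≤ _ := hmgf
    _ = _ := by rw [← exp_add]; congr 1; push_cast; ring

section

variable {α σ₁ D T t v : ℝ}

lemma d₁_eq_div_sub (hσ₁ : σ₁ ≠ 0) (ht : t < T) :
    d₁ α σ₁ D T t v = log (D / v) / (σ₁ * √(T - t)) - (1 / 2 + α / σ₁ ^ 2) * (σ₁ * √(T - t)) := by
  have hτ : 0 < √(T - t) := sqrt_pos.2 (sub_pos.2 ht)
  have hsq : √(T - t) ^ 2 = T - t := sq_sqrt (sub_nonneg.2 ht.le)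
  rw [d₁]
  field_simp
  rw [hsq]

lemma log_div_sub_abs_le_d₁ (hσ₁ : 0 < σ₁) (ht₀ : 0 ≤ t) (ht : t < T) (hv : 0 < v)
    (hvD : v ≤ D) :
    log (D / v) / (σ₁ * √T) - |1 / 2 + α / σ₁ ^ 2| * (σ₁ * √T) ≤ d₁ α σ₁ D T t v := by
  have hk : 0 < σ₁ * √(T - t) := mul_pos hσ₁ (sqrt_pos.2 (sub_pos.2 ht))
  have hkK : σ₁ * √(T - t) ≤ σ₁ * √T := by gcongr; linarith
  have hx : 0 ≤ log (D / v) := log_nonneg ((one_le_div hv).2 hvD)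
  rw [d₁_eq_div_sub hσ₁.ne' ht]
  have hdiv : log (D / v) / (σ₁ * √T) ≤ log (D / v) / (σ₁ * √(T - t)) :=
    div_le_div_of_nonneg_left hx hk hkK
  have hc : (1 / 2 + α / σ₁ ^ 2) * (σ₁ * √(T - t)) ≤ |1 / 2 + α / σ₁ ^ 2| * (σ₁ * √T) :=
    (mul_le_mul_of_nonneg_right (le_abs_self _) hk.le).trans
      (mul_le_mul_of_nonneg_left hkK (abs_nonneg _))
  linarith

lemma neg_abs_le_d₁ (hσ₁ : 0 < σ₁) (ht₀ : 0 ≤ t) (ht : t < T) (hv : 0 < v) (hvD : v ≤ D) :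
    -(|1 / 2 + α / σ₁ ^ 2| * (σ₁ * √T)) ≤ d₁ α σ₁ D T t v := by
  have hx : 0 ≤ log (D / v) / (σ₁ * √T) :=
    div_nonneg (log_nonneg ((one_le_div hv).2 hvD)) (by positivity)
  linarith [log_div_sub_abs_le_d₁ (α := α) hσ₁ ht₀ ht hv hvD]

lemma div_mul_one_sub_stdNormalCDF_d₂_le (hσ₁ : 0 < σ₁) (ht : t < T) (hD : 0 < D) (hv : 0 < v) :
    D / v * (1 - stdNormalCDF (d₂ α σ₁ D T t v)) ≤ exp (α * (T - t) + 1 / 2 - d₁ α σ₁ D T t v) := by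
  set k := σ₁ * √(T - t) with hk_def
  have hk : 0 < k := mul_pos hσ₁ (sqrt_pos.2 (sub_pos.2 ht))
  have hck : (1 / 2 + α / σ₁ ^ 2) * k ^ 2 = k ^ 2 / 2 + α * (T - t) := by
    rw [hk_def, mul_pow, sq_sqrt (sub_nonneg.2 ht.le)]
    field_simp
  have hx : log (D / v) = k * d₁ α σ₁ D T t v + k ^ 2 / 2 + α * (T - t) := by
    rw [d₁_eq_div_sub hσ₁.ne' ht, ← hk_def, mul_sub, mul_div_cancel₀ _ hk.ne']
    linear_combination hck
  calc D / v * (1 - stdNormalCDF (d₂ α σ₁ D T t v))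
      ≤ exp (log (D / v)) * exp ((k + 1) ^ 2 / 2 - (k + 1) * d₂ α σ₁ D T t v) := by
        rw [exp_log (div_pos hD hv)]
        exact mul_le_mul_of_nonneg_left (one_sub_stdNormalCDF_le_exp (by linarith) _)
          (by positivity)
    _ = exp (α * (T - t) + 1 / 2 - d₁ α σ₁ D T t v) := by
        rw [← exp_add, hx, d₂, ← hk_def]
        congr 1
        ring

lemma one_le_gratio (hD : 0 ≤ D) (hv : 0 ≤ v) : 1 ≤ gratio α σ₁ D T t v := by
  unfold gratio
  exact le_add_of_nonneg_right <| div_nonneg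
    (mul_nonneg hD (sub_nonneg.2 (stdNormalCDF_le_one _)))
    (mul_nonneg hv (stdNormalCDF_pos _).le)

lemma gratio_le_one_add_exp_sub_d₁ (hσ₁ : 0 < σ₁) (ht₀ : 0 ≤ t) (ht : t < T) (hv : 0 < v)
    (hvD : v ≤ D) :
    gratio α σ₁ D T t v ≤ 1 + exp (|α| * T + 1 / 2 - d₁ α σ₁ D T t v)
      / stdNormalCDF (-(|1 / 2 + α / σ₁ ^ 2| * (σ₁ * √T))) := by
  have hN := stdNormalCDF_pos (-(|1 / 2 + α / σ₁ ^ 2| * (σ₁ * √T)))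
  have hαT : α * (T - t) ≤ |α| * T :=
    (mul_le_mul_of_nonneg_right (le_abs_self α) (sub_nonneg.2 ht.le)).trans
      (mul_le_mul_of_nonneg_left (by linarith) (abs_nonneg α))
  rw [gratio, mul_div_mul_comm, ← mul_div_assoc]
  gcongr 1 + ?_
  apply div_le_div₀ (exp_pos _).le _ hN (stdNormalCDF_mono (neg_abs_le_d₁ hσ₁ ht₀ ht hv hvD))
  calc D / v * (1 - stdNormalCDF (d₂ α σ₁ D T t v))
      ≤ exp (α * (T - t) + 1 / 2 - d₁ α σ₁ D T t v) :=
        div_mul_one_sub_stdNormalCDF_d₂_le hσ₁ ht (hv.trans_le hvD) hv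
    _ ≤ _ := by gcongr

end

section

variable {ι : Type*} {l : Filter ι} {α σ₁ D T : ℝ} {tseq vseq : ι → ℝ}

lemma tendsto_gratio_of_tendsto_d₁ (hσ₁ : 0 < σ₁) (ht : ∀ i, tseq i ∈ Ico 0 T)
    (hv : ∀ i, 0 < vseq i ∧ vseq i ≤ D)
    (hd : Tendsto (fun i ↦ d₁ α σ₁ D T (tseq i) (vseq i)) l atTop) :
    Tendsto (fun i ↦ gratio α σ₁ D T (tseq i) (vseq i)) l (𝓝 1) := by
  have hexp : Tendsto (fun i ↦ exp (|α| * T + 1 / 2 - d₁ α σ₁ D T (tseq i) (vseq i))) l (𝓝 0) :=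
    tendsto_exp_atBot.comp (tendsto_atBot_add_const_left _ _ (tendsto_neg_atTop_atBot.comp hd))
  have hupper :=
    (hexp.div_const (stdNormalCDF (-(|1 / 2 + α / σ₁ ^ 2| * (σ₁ * √T))))).const_add 1
  rw [zero_div, add_zero] at hupper
  exact tendsto_of_tendsto_of_tendsto_of_le_of_le tendsto_const_nhds hupper
    (fun i ↦ one_le_gratio ((hv i).1.le.trans (hv i).2) (hv i).1.le)
    (fun i ↦ gratio_le_one_add_exp_sub_d₁ hσ₁ (ht i).1 (ht i).2 (hv i).1 (hv i).2)

lemma tendsto_d₁_atTop_of_tendsto_zero (hσ₁ : 0 < σ₁) (hD : 0 < D) (hT : 0 < T)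
    (ht : ∀ i, tseq i ∈ Ico 0 T) (hv : ∀ i, 0 < vseq i ∧ vseq i ≤ D)
    (hv₀ : Tendsto vseq l (𝓝 0)) :
    Tendsto (fun i ↦ d₁ α σ₁ D T (tseq i) (vseq i)) l atTop := by
  have hv₀' : Tendsto vseq l (𝓝[>] 0) :=
    tendsto_nhdsWithin_iff.2 ⟨hv₀, .of_forall fun i ↦ (hv i).1⟩
  have hlog : Tendsto (fun i ↦ log (D / vseq i)) l atTop := by
    simpa [Function.comp_def, div_eq_mul_inv] using
      tendsto_log_atTop.comp (hv₀'.inv_tendsto_nhdsGT_zero.const_mul_atTop hD)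
  refine tendsto_atTop_mono
    (fun i ↦ log_div_sub_abs_le_d₁ hσ₁ (ht i).1 (ht i).2 (hv i).1 (hv i).2) ?_
  exact tendsto_atTop_add_const_right _ _ (hlog.atTop_div_const (by positivity))

lemma tendsto_d₁_atTop_of_tendsto_expiry {v₀ : ℝ} (hσ₁ : 0 < σ₁) (hv₀ : 0 < v₀) (hv₀D : v₀ < D)
    (ht : ∀ i, tseq i < T) (htT : Tendsto tseq l (𝓝 T)) (hvv : Tendsto vseq l (𝓝 v₀)) :
    Tendsto (fun i ↦ d₁ α σ₁ D T (tseq i) (vseq i)) l atTop := by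
  have hk : Tendsto (fun i ↦ σ₁ * √(T - tseq i)) l (𝓝[>] 0) := by
    refine tendsto_nhdsWithin_iff.2
      ⟨?_, .of_forall fun i ↦ mul_pos hσ₁ (sqrt_pos.2 (sub_pos.2 (ht i)))⟩
    simpa using ((tendsto_const_nhds (x := T)).sub htT).sqrt.const_mul σ₁
  have hlog : Tendsto (fun i ↦ log (D / vseq i)) l (𝓝 (log (D / v₀))) :=
    (tendsto_const_nhds.div hvv hv₀.ne').log (div_pos (hv₀.trans hv₀D) hv₀).ne'
  have hx₀ : 0 < log (D / v₀) := log_pos ((one_lt_div hv₀).2 hv₀D)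
  have := (hlog.pos_mul_atTop hx₀ hk.inv_tendsto_nhdsGT_zero).atTop_add
    ((tendsto_nhdsWithin_iff.1 hk).1.const_mul (-(1 / 2 + α / σ₁ ^ 2)))
  refine this.congr fun i ↦ ?_
  rw [d₁_eq_div_sub hσ₁.ne' (ht i), Pi.inv_apply]
  ring

end

theorem gratio_bounded_general (α σ₁ D T : ℝ)
    (hσ₁ : 0 < σ₁) (hD : 0 < D) (hT : 0 < T) :
    (∃ M : ℝ, ∀ t v : ℝ, 0 ≤ t → t < T → 0 < v → v ≤ D →
      gratio α σ₁ D T t v ≤ M) ∧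
    (∀ (tseq vseq : ℕ → ℝ) (t : ℝ), t ∈ Set.Icc 0 T →
      (∀ n, tseq n ∈ Set.Ico 0 T) → (∀ n, 0 < vseq n ∧ vseq n ≤ D) →
      Tendsto tseq atTop (nhds t) → Tendsto vseq atTop (nhds 0) →
      Tendsto (fun n => gratio α σ₁ D T (tseq n) (vseq n)) atTop (nhds 1)) ∧
    (∀ (tseq vseq : ℕ → ℝ) (v : ℝ), 0 < v → v < D →
      (∀ n, tseq n ∈ Set.Ico 0 T) → (∀ n, 0 < vseq n ∧ vseq n ≤ D) →
      Tendsto tseq atTop (nhds T) → Tendsto vseq atTop (nhds v) →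
      Tendsto (fun n => gratio α σ₁ D T (tseq n) (vseq n)) atTop (nhds 1)) := by
  set K := |1 / 2 + α / σ₁ ^ 2| * (σ₁ * √T)
  refine ⟨⟨1 + exp (|α| * T + 1 / 2 + K) / stdNormalCDF (-K), fun t v ht₀ ht hv hvD ↦ ?_⟩,
    fun tseq vseq t _ ht hv _ hv₀ ↦ ?_, fun tseq vseq v₀ hv₀ hv₀D ht hv htT hvv ↦ ?_⟩
  · have hK := neg_abs_le_d₁ (α := α) hσ₁ ht₀ ht hv hvD
    have hN := (stdNormalCDF_pos (-K)).le
    calc gratio α σ₁ D T t v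
        ≤ 1 + exp (|α| * T + 1 / 2 - d₁ α σ₁ D T t v) / stdNormalCDF (-K) :=
          gratio_le_one_add_exp_sub_d₁ hσ₁ ht₀ ht hv hvD
      _ ≤ _ := by gcongr; linarith
  · exact tendsto_gratio_of_tendsto_d₁ hσ₁ ht hv
      (tendsto_d₁_atTop_of_tendsto_zero hσ₁ hD hT ht hv hv₀)
  · exact tendsto_gratio_of_tendsto_d₁ hσ₁ ht hv
      (tendsto_d₁_atTop_of_tendsto_expiry hσ₁ hv₀ hv₀D (fun n ↦ (ht n).2) htT hvv)

theorem gratio_bounded (α σ₁ D T : ℝ)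
    (hσ₁ : 0 < σ₁) (hD : 0 < D) (hT : 0 < T)
    (hα : 0 < 1 / 2 + α / σ₁ ^ 2) :
    (∃ M : ℝ, ∀ t v : ℝ, 0 ≤ t → t < T → 0 < v → v ≤ D →
      gratio α σ₁ D T t v ≤ M) ∧
    (∀ (tseq vseq : ℕ → ℝ) (t : ℝ), t ∈ Set.Icc 0 T →
      (∀ n, tseq n ∈ Set.Ico 0 T) → (∀ n, 0 < vseq n ∧ vseq n ≤ D) →
      Tendsto tseq atTop (nhds t) → Tendsto vseq atTop (nhds 0) →
      Tendsto (fun n => gratio α σ₁ D T (tseq n) (vseq n)) atTop (nhds 1)) ∧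
    (∀ (tseq vseq : ℕ → ℝ) (v : ℝ), 0 < v → v < D →
      (∀ n, tseq n ∈ Set.Ico 0 T) → (∀ n, 0 < vseq n ∧ vseq n ≤ D) →
      Tendsto tseq atTop (nhds T) → Tendsto vseq atTop (nhds v) →
      Tendsto (fun n => gratio α σ₁ D T (tseq n) (vseq n)) atTop (nhds 1)) :=
  gratio_bounded_general α σ₁ D T hσ₁ hD hT
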